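/- arXiv:1502.02398 — 3 statements merged into one kernel-verified Lean document; each statement's English description precedes it below -/
import Mathlib

section
/- Let k be a kernel with sup-norm bound ‖f‖_∞ ≤ 1 for all f in the unit ball of H_k, let P be a probability measure on Z, and let S = {z_1,…,z_n} be i.i.d. from P. Then with probability at least 1 − δ, ‖μ_k(P) − μ_k(P_S)‖_{H_k} ≤ 2√(𝔼_{z∼P}[k(z,z)]/n) + √(2 log(1/δ)/n). -/
/-
The sup-norm bound gives `‖K z‖ ≤ 1`. Write `m = ∫ K dP` and `Δ(z₁, …, zₙ) = ‖m - n⁻¹ ∑ K zᵢ‖`.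
Replacing one sample point moves the empirical mean by at most `2/n`, so by McDiarmid's inequality
`Δ` exceeds its mean by `√(2 log (1/δ) / n)` with probability at most `δ`. The mean is controlled
in `L²`: the centred vectors `K zᵢ - m` are independent, so their cross terms integrate to zero and
`𝔼 Δ² = (𝔼 ‖K‖² - ‖m‖²) / n ≤ 𝔼 k(z, z) / n`, whence `𝔼 Δ ≤ √(𝔼 k(z, z) / n)`.
-/

open scoped RealInnerProductSpace NNReal
open MeasureTheory ProbabilityTheory

theorem MeasureTheory.MeasurePreserving.integral_comp_of_aestronglyMeasurable {α β E : Type*}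
    [MeasurableSpace α] [MeasurableSpace β] [NormedAddCommGroup E] [NormedSpace ℝ E]
    {μ : Measure α} {ν : Measure β} {T : α → β} (hT : MeasurePreserving T μ ν) {g : β → E}
    (hg : AEStronglyMeasurable g ν) : ∫ x, g (T x) ∂μ = ∫ y, g y ∂ν := by
  rw [← hT.map_eq] at hg ⊢
  exact (integral_map hT.measurable.aemeasurable hg).symm

theorem MeasureTheory.AEStronglyMeasurable.exists_stronglyMeasurable_ae_eq_forall_norm_le
    {α E : Type*} [MeasurableSpace α] [NormedAddCommGroup E] {μ : Measure α} {f : α → E}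
    (hf : AEStronglyMeasurable f μ) {C : ℝ} (hC : 0 ≤ C) (h : ∀ᵐ x ∂μ, ‖f x‖ ≤ C) :
    ∃ g, StronglyMeasurable g ∧ (∀ x, ‖g x‖ ≤ C) ∧ f =ᵐ[μ] g := by
  set s := {x | ‖hf.mk f x‖ ≤ C}
  refine ⟨s.indicator (hf.mk f), hf.stronglyMeasurable_mk.indicator
    (measurableSet_le hf.stronglyMeasurable_mk.norm.measurable measurable_const), fun x ↦ ?_, ?_⟩
  · by_cases hx : x ∈ s
    · rwa [Set.indicator_of_mem hx]
    · simp [hx, hC]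
  · filter_upwards [hf.ae_eq_mk, h] with x hx hxC
    rw [Set.indicator_of_mem (show x ∈ s by simpa [s, ← hx]), hx]

theorem ofReal_one_sub_le_measure_of_compl_subset {Ω : Type*} [MeasurableSpace Ω]
    {μ : Measure Ω} [IsProbabilityMeasure μ] {s t : Set Ω} {δ : ℝ} (hst : sᶜ ⊆ t)
    (ht : μ.real t ≤ δ) : ENNReal.ofReal (1 - δ) ≤ μ s := by
  have hδ : 0 ≤ δ := measureReal_nonneg.trans ht
  rw [ENNReal.ofReal_sub _ hδ, ENNReal.ofReal_one, tsub_le_iff_right]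
  calc 1 = μ (s ∪ sᶜ) := by simp
    _ ≤ μ s + μ sᶜ := measure_union_le _ _
    _ ≤ μ s + ENNReal.ofReal δ := by
      gcongr
      exact (measure_mono hst).trans
        ((ENNReal.le_ofReal_iff_toReal_le (measure_ne_top _ _) hδ).2 ht)

theorem integral_le_sqrt_integral_sq {Ω : Type*} [MeasurableSpace Ω] {μ : Measure Ω}
    [IsProbabilityMeasure μ] {X : Ω → ℝ} (hX : MemLp X 2 μ) :
    ∫ ω, X ω ∂μ ≤ Real.sqrt (∫ ω, X ω ^ 2 ∂μ) := by
  have h := variance_nonneg X μ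
  rw [variance_eq_sub hX] at h
  exact (le_abs_self _).trans (Real.abs_le_sqrt (by simpa using h))

theorem mem_Icc_iInf_add_of_abs_sub_le {α : Type*} [Nonempty α] {f : α → ℝ} {c : ℝ}
    (h : ∀ x y, |f x - f y| ≤ c) (x : α) : f x ∈ Set.Icc (⨅ y, f y) ((⨅ y, f y) + c) := by
  obtain ⟨x₀⟩ := ‹Nonempty α›
  have hbdd : BddBelow (Set.range f) :=
    ⟨f x₀ - c, by rintro _ ⟨y, rfl⟩; linarith [(abs_le.mp (h x₀ y)).2]⟩
  refine ⟨ciInf_le hbdd x, ?_⟩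
  have : f x - c ≤ ⨅ y, f y := le_ciInf fun y ↦ by linarith [(abs_le.mp (h x y)).2]
  linarith

theorem measurePreserving_finCons {Z : Type*} [MeasurableSpace Z] (μ : Measure Z) [SigmaFinite μ]
    (n : ℕ) :
    MeasurePreserving (fun p : Z × (Fin n → Z) ↦ (Fin.cons p.1 p.2 : Fin (n + 1) → Z))
      (μ.prod (Measure.pi fun _ ↦ μ)) (Measure.pi fun _ ↦ μ) := by
  convert (measurePreserving_piFinSuccAbove (fun _ : Fin (n + 1) ↦ μ) 0).symm using 1
  ext p : 1
  simp [Fin.insertNthEquiv, Fin.insertNth_zero']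

theorem measurePreserving_eval_prod_eval {α ι : Type*} [MeasurableSpace α] [Fintype ι]
    {μ : Measure α} [IsProbabilityMeasure μ] {i j : ι} (hij : i ≠ j) :
    MeasurePreserving (fun x ↦ (x i, x j)) (Measure.pi fun _ ↦ μ) (μ.prod μ) := by
  refine ⟨by fun_prop, ?_⟩
  have hind : IndepFun (fun x : ι → α ↦ x i) (fun x ↦ x j) (Measure.pi fun _ ↦ μ) :=
    (iIndepFun_pi (X := fun _ ↦ id) fun _ ↦ aemeasurable_id).indepFun hij
  rw [(indepFun_iff_map_prod_eq_prod_map_map (measurable_pi_apply i).aemeasurable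
      (measurable_pi_apply j).aemeasurable).1 hind,
    (measurePreserving_eval _ i).map_eq, (measurePreserving_eval _ j).map_eq]

namespace ProbabilityTheory

theorem HasSubgaussianMGF.of_comp_measurePreserving {Ω Ω' : Type*} [MeasurableSpace Ω]
    [MeasurableSpace Ω'] {μ : Measure Ω} {μ' : Measure Ω'} {T : Ω' → Ω} {X : Ω → ℝ}
    {c : ℝ≥0} (hT : MeasurePreserving T μ' μ) (hX : Measurable X)
    (h : HasSubgaussianMGF (X ∘ T) c μ') : HasSubgaussianMGF X c μ :=
  h.congr_identDistrib ⟨(hX.comp hT.measurable).aemeasurable, hX.aemeasurable,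
    by rw [← Measure.map_map hX hT.measurable, hT.map_eq]⟩

theorem HasSubgaussianMGF.prod_add_of_forall {α β : Type*} [MeasurableSpace α]
    [MeasurableSpace β] {μ : Measure α} {ν : Measure β} [IsProbabilityMeasure μ]
    [IsProbabilityMeasure ν] {X : α × β → ℝ} {Y : β → ℝ} {cX cY : ℝ≥0}
    (hXm : AEStronglyMeasurable X (μ.prod ν))
    (hX : ∀ b, HasSubgaussianMGF (fun a ↦ X (a, b)) cX μ) (hY : HasSubgaussianMGF Y cY ν) :
    HasSubgaussianMGF (fun p ↦ X p + Y p.2) (cX + cY) (μ.prod ν) := by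
  have hsplit (t : ℝ) (p : α × β) :
      Real.exp (t * (X p + Y p.2)) = Real.exp (t * X p) * Real.exp (t * Y p.2) := by
    rw [mul_add, Real.exp_add]
  have hslice (t : ℝ) (b : β) :
      ∫ a, Real.exp (t * (X (a, b) + Y b)) ∂μ =
        mgf (fun a ↦ X (a, b)) μ t * Real.exp (t * Y b) := by
    simp_rw [hsplit t (_, b)]
    exact integral_mul_const _ _
  have hint (t : ℝ) : Integrable (fun p ↦ Real.exp (t * (X p + Y p.2))) (μ.prod ν) := by
    have hm : AEStronglyMeasurable (fun p ↦ Real.exp (t * (X p + Y p.2))) (μ.prod ν) :=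
      (Real.continuous_exp.comp_aestronglyMeasurable
        ((hXm.add hY.aestronglyMeasurable.comp_snd).const_mul t))
    refine (integrable_prod_iff' hm).2 ⟨ae_of_all _ fun b ↦ ?_, ?_⟩
    · simp_rw [hsplit t (_, b)]
      exact ((hX b).integrable_exp_mul t).mul_const _
    · refine ((hY.integrable_exp_mul t).const_mul (Real.exp (cX * t ^ 2 / 2))).mono'
        hm.prod_swap.norm.integral_prod_right' (ae_of_all _ fun b ↦ ?_)
      simp_rw [Real.norm_eq_abs, Real.abs_exp, hslice]
      rw [abs_of_nonneg (mul_nonneg mgf_nonneg (Real.exp_nonneg _))]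
      exact mul_le_mul_of_nonneg_right ((hX b).mgf_le t) (Real.exp_nonneg _)
  refine ⟨hint, fun t ↦ ?_⟩
  calc mgf (fun p ↦ X p + Y p.2) (μ.prod ν) t
      = ∫ b, mgf (fun a ↦ X (a, b)) μ t * Real.exp (t * Y b) ∂ν := by
        rw [mgf, integral_prod_symm _ (hint t)]
        simp_rw [hslice]
    _ ≤ ∫ b, Real.exp (cX * t ^ 2 / 2) * Real.exp (t * Y b) ∂ν := by
        refine integral_mono ?_ ((hY.integrable_exp_mul t).const_mul _)
          fun b ↦ mul_le_mul_of_nonneg_right ((hX b).mgf_le t) (Real.exp_nonneg _)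
        simpa only [hslice] using (hint t).integral_prod_right
    _ = Real.exp (cX * t ^ 2 / 2) * mgf Y ν t := integral_const_mul _ _
    _ ≤ Real.exp (cX * t ^ 2 / 2) * Real.exp (cY * t ^ 2 / 2) := by
        gcongr; exact hY.mgf_le t
    _ = Real.exp ((cX + cY : ℝ≥0) * t ^ 2 / 2) := by
        rw [← Real.exp_add]; push_cast; ring_nf

variable {Z : Type*}

def HasBoundedDifferences {ι : Type*} [DecidableEq ι] (g : (ι → Z) → ℝ) (c : ℝ) : Prop :=
  ∀ x i y, |g x - g (Function.update x i y)| ≤ c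

theorem HasBoundedDifferences.abs_sub_cons_le {n : ℕ} {g : (Fin (n + 1) → Z) → ℝ} {c : ℝ}
    (hg : HasBoundedDifferences g c) (xs : Fin n → Z) (z z' : Z) :
    |g (Fin.cons z xs) - g (Fin.cons z' xs)| ≤ c := by
  simpa [Fin.update_cons_zero] using hg (Fin.cons z xs) 0 z'

variable [MeasurableSpace Z]

theorem HasBoundedDifferences.integral_cons {n : ℕ} {g : (Fin (n + 1) → Z) → ℝ} {c : ℝ}
    {μ : Measure Z} [IsProbabilityMeasure μ] (hg : HasBoundedDifferences g c)
    (hint : ∀ xs, Integrable (fun z ↦ g (Fin.cons z xs)) μ) :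
    HasBoundedDifferences (fun xs ↦ ∫ z, g (Fin.cons z xs) ∂μ) c := by
  intro xs i y
  have := norm_integral_le_of_norm_le_const (μ := μ) (C := c)
    (f := fun z ↦ g (Fin.cons z xs) - g (Fin.cons z (Function.update xs i y)))
    (ae_of_all _ fun z ↦ by rw [Fin.cons_update]; exact hg _ _ _)
  rwa [integral_sub (hint _) (hint _), probReal_univ, mul_one] at this

/-- McDiarmid's inequality, in mgf form. Write `g = (g - h) + h`, where `h` averages `g` over the
first coordinate. For fixed remaining coordinates `g - h` is centred with range at most `c`, hence
Hoeffding's lemma applies; `h` has bounded differences in the remaining coordinates and is handled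
by induction. -/
theorem HasBoundedDifferences.hasSubgaussianMGF (μ : Measure Z) [IsProbabilityMeasure μ] :
    ∀ {n : ℕ} {g : (Fin n → Z) → ℝ} {c : ℝ≥0}, Measurable g → HasBoundedDifferences g c →
      HasSubgaussianMGF (fun x ↦ g x - ∫ y, g y ∂Measure.pi fun _ ↦ μ) (n * (c / 2) ^ 2)
        (Measure.pi fun _ ↦ μ)
  | 0, g, c, _, _ => by
    have hg : ∀ x, g x = g Fin.elim0 := fun x ↦ congrArg g (Subsingleton.elim _ _)
    simp [hg, HasSubgaussianMGF.fun_zero]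
  | n + 1, g, c, hgm, hg => by
    have : Nonempty Z := nonempty_of_isProbabilityMeasure μ
    set Pn := Measure.pi fun _ : Fin n ↦ μ
    have hcons := measurePreserving_finCons μ n
    have hslice_meas (xs : Fin n → Z) : Measurable fun z ↦ g (Fin.cons z xs) :=
      hgm.comp (hcons.measurable.comp measurable_prodMk_right)
    have hslice_Icc (xs : Fin n → Z) :=
      mem_Icc_iInf_add_of_abs_sub_le (hg.abs_sub_cons_le xs)
    set h : (Fin n → Z) → ℝ := fun xs ↦ ∫ z, g (Fin.cons z xs) ∂μ
    have hhm : Measurable h :=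
      (StronglyMeasurable.integral_prod_left (f := fun z xs ↦ g (Fin.cons z xs))
        (hgm.comp hcons.measurable).stronglyMeasurable).measurable
    have hIH := hasSubgaussianMGF μ hhm <| hg.integral_cons fun xs ↦
      .of_mem_Icc _ _ (hslice_meas xs).aemeasurable (ae_of_all _ (hslice_Icc xs))
    have hHoeffding (xs : Fin n → Z) :
        HasSubgaussianMGF (fun z ↦ g (Fin.cons z xs) - h xs) ((c / 2) ^ 2) μ := by
      simpa using hasSubgaussianMGF_of_mem_Icc (hslice_meas xs).aemeasurable
        (ae_of_all _ (hslice_Icc xs))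
    have hF : HasSubgaussianMGF (fun p : Z × (Fin n → Z) ↦ g (Fin.cons p.1 p.2) - ∫ xs, h xs ∂Pn)
        ((n + 1 : ℕ) * (c / 2) ^ 2) (μ.prod Pn) := by
      convert HasSubgaussianMGF.prod_add_of_forall (X := fun p ↦ g (Fin.cons p.1 p.2) - h p.2)
        ((hgm.comp hcons.measurable).sub (hhm.comp measurable_snd)).aestronglyMeasurable
        hHoeffding hIH using 1
      · ext p; ring
      · push_cast; ring
    have hmean : ∫ x, g x ∂Measure.pi (fun _ ↦ μ) = ∫ xs, h xs ∂Pn := by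
      have hint : Integrable (fun p : Z × (Fin n → Z) ↦ g (Fin.cons p.1 p.2)) (μ.prod Pn) := by
        simpa [sub_eq_add_neg, integrable_add_const_iff] using hF.integrable
      rw [← hcons.map_eq, integral_map hcons.measurable.aemeasurable hgm.aestronglyMeasurable,
        integral_prod_symm _ hint]
    rw [hmean]
    exact hF.of_comp_measurePreserving hcons (hgm.sub measurable_const)

theorem HasBoundedDifferences.measureReal_sub_integral_ge_le (μ : Measure Z)
    [IsProbabilityMeasure μ] {n : ℕ} {g : (Fin n → Z) → ℝ} {c : ℝ≥0} (hgm : Measurable g)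
    (hg : HasBoundedDifferences g c) {ε : ℝ} (hε : 0 ≤ ε) :
    (Measure.pi fun _ ↦ μ).real {x | ε ≤ g x - ∫ y, g y ∂Measure.pi fun _ ↦ μ} ≤
      Real.exp (-2 * ε ^ 2 / (n * c ^ 2)) := by
  convert (hg.hasSubgaussianMGF μ hgm).measure_ge_le hε using 2
  push_cast
  ring

end ProbabilityTheory

section InnerProductSpace

variable {α H : Type*} [MeasurableSpace α] [NormedAddCommGroup H] [InnerProductSpace ℝ H]

theorem norm_le_of_forall_abs_inner_le {x : H} {C : ℝ}
    (h : ∀ f : H, ‖f‖ ≤ 1 → |⟪f, x⟫| ≤ C) : ‖x‖ ≤ C := by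
  rcases eq_or_ne x 0 with rfl | hx
  · simpa using h 0 (by simp)
  have hx' : ‖x‖ ≠ 0 := norm_ne_zero_iff.2 hx
  simpa [real_inner_smul_left, real_inner_self_eq_norm_sq, norm_smul, hx', sq] using
    h (‖x‖⁻¹ • x) (by simp [norm_smul, hx'])

theorem MeasureTheory.MemLp.integrable_inner {μ : Measure α} {f g : α → H} (hf : MemLp f 2 μ)
    (hg : MemLp g 2 μ) : Integrable (fun x ↦ ⟪f x, g x⟫) μ := by
  have hf2 := (memLp_two_iff_integrable_sq_norm hf.1).1 hf
  have hg2 := (memLp_two_iff_integrable_sq_norm hg.1).1 hg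
  refine ((hf2.add hg2).div_const 2).mono' (hf.1.inner hg.1) (ae_of_all _ fun x ↦ ?_)
  change |⟪f x, g x⟫| ≤ (‖f x‖ ^ 2 + ‖g x‖ ^ 2) / 2
  nlinarith [abs_real_inner_le_norm (f x) (g x), sq_nonneg (‖f x‖ - ‖g x‖)]

theorem hasBoundedDifferences_norm_sub_average {Z : Type*} {n : ℕ} {f : Z → H} {C : ℝ}
    (hf : ∀ z, ‖f z‖ ≤ C) (m : H) :
    HasBoundedDifferences (fun x : Fin n → Z ↦ ‖m - (n : ℝ)⁻¹ • ∑ i, f (x i)‖) (2 * C / n) := by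
  intro x i y
  have hsum : ∑ k, f (Function.update x i y k) - ∑ k, f (x k) = f y - f (x i) := by
    rw [← Finset.sum_sub_distrib, Finset.sum_eq_single i (fun k _ hk ↦ by simp [hk]) (by simp)]
    simp
  calc |‖m - (n : ℝ)⁻¹ • ∑ k, f (x k)‖ - ‖m - (n : ℝ)⁻¹ • ∑ k, f (Function.update x i y k)‖|
      ≤ ‖(n : ℝ)⁻¹ • (∑ k, f (Function.update x i y k) - ∑ k, f (x k))‖ := by
        refine (abs_norm_sub_norm_le _ _).trans_eq ?_
        rw [smul_sub]; congr 1; abel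
    _ ≤ (n : ℝ)⁻¹ * (C + C) := by
        rw [hsum, norm_smul, Real.norm_of_nonneg (by positivity)]
        gcongr
        exact (norm_sub_le _ _).trans (add_le_add (hf y) (hf (x i)))
    _ = 2 * C / n := by ring

variable [CompleteSpace H] {μ : Measure α} [IsProbabilityMeasure μ] {ι : Type*} [Fintype ι]

theorem integral_inner_comp_eval_of_ne {f : α → H} (hf : MemLp f 2 μ) (hf0 : ∫ z, f z ∂μ = 0)
    {i j : ι} (hij : i ≠ j) : ∫ x, ⟪f (x i), f (x j)⟫ ∂Measure.pi (fun _ ↦ μ) = 0 := by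
  have hprod : Integrable (fun p : α × α ↦ ⟪f p.1, f p.2⟫) (μ.prod μ) :=
    (hf.comp_measurePreserving measurePreserving_fst).integrable_inner
      (hf.comp_measurePreserving measurePreserving_snd)
  rw [(measurePreserving_eval_prod_eval hij).integral_comp_of_aestronglyMeasurable
    (g := fun p : α × α ↦ ⟪f p.1, f p.2⟫) hprod.1, integral_prod _ hprod]
  simp_rw [integral_inner (hf.integrable one_le_two), hf0, inner_zero_right, integral_zero]

theorem integral_norm_sum_comp_eval_sq {f : α → H} (hf : MemLp f 2 μ) (hf0 : ∫ z, f z ∂μ = 0) :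
    ∫ x, ‖∑ i, f (x i)‖ ^ 2 ∂Measure.pi (fun _ : ι ↦ μ) = Fintype.card ι * ∫ z, ‖f z‖ ^ 2 ∂μ := by
  classical
  have hf2 := (memLp_two_iff_integrable_sq_norm hf.1).1 hf
  have hterm (i j : ι) : ∫ x, ⟪f (x i), f (x j)⟫ ∂Measure.pi (fun _ ↦ μ) =
      if i = j then ∫ z, ‖f z‖ ^ 2 ∂μ else 0 := by
    split_ifs with hij
    · subst hij
      simp_rw [real_inner_self_eq_norm_sq]
      exact (measurePreserving_eval (fun _ ↦ μ) i).integral_comp_of_aestronglyMeasurable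
        (g := fun z ↦ ‖f z‖ ^ 2) hf2.1
    · exact integral_inner_comp_eval_of_ne hf hf0 hij
  have hint (i j : ι) : Integrable (fun x ↦ ⟪f (x i), f (x j)⟫) (Measure.pi fun _ ↦ μ) :=
    (hf.comp_measurePreserving (measurePreserving_eval _ i)).integrable_inner
      (hf.comp_measurePreserving (measurePreserving_eval _ j))
  simp_rw [← real_inner_self_eq_norm_sq, sum_inner, inner_sum]
  rw [integral_finsetSum _ fun i _ ↦ integrable_finsetSum _ fun j _ ↦ hint i j]
  simp_rw [integral_finsetSum _ fun j _ ↦ hint _ j, hterm, real_inner_self_eq_norm_sq]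
  simp

theorem integral_norm_sub_integral_sq {f : α → H} (hf : MemLp f 2 μ) :
    ∫ z, ‖f z - ∫ y, f y ∂μ‖ ^ 2 ∂μ = ∫ z, ‖f z‖ ^ 2 ∂μ - ‖∫ y, f y ∂μ‖ ^ 2 := by
  set m := ∫ y, f y ∂μ
  have hf1 := hf.integrable one_le_two
  have hf2 := (memLp_two_iff_integrable_sq_norm hf.1).1 hf
  have hcross : ∫ z, ⟪f z, m⟫ ∂μ = ‖m‖ ^ 2 := by
    simp_rw [real_inner_comm m]
    rw [integral_inner hf1, real_inner_self_eq_norm_sq]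
  simp_rw [norm_sub_sq_real]
  rw [integral_add ((hf2.sub' ((hf1.inner_const m).const_mul 2))) (integrable_const _),
    integral_sub hf2 ((hf1.inner_const m).const_mul 2), integral_const_mul, hcross]
  simp only [integral_const, probReal_univ, smul_eq_mul, one_mul]
  ring

theorem integral_norm_integral_sub_average_sq_le {f : α → H} (hf : MemLp f 2 μ) {n : ℕ}
    (hn : n ≠ 0) :
    ∫ x, ‖∫ z, f z ∂μ - (n : ℝ)⁻¹ • ∑ i, f (x i)‖ ^ 2 ∂Measure.pi (fun _ : Fin n ↦ μ) ≤
      (∫ z, ‖f z‖ ^ 2 ∂μ) / n := by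
  set m := ∫ z, f z ∂μ
  have hg : MemLp (fun z ↦ f z - m) 2 μ := hf.sub (memLp_const m)
  have hg0 : ∫ z, (f z - m) ∂μ = 0 := by
    rw [integral_sub (hf.integrable one_le_two) (integrable_const m)]
    simp [m]
  have hpt (x : Fin n → α) :
      ‖m - (n : ℝ)⁻¹ • ∑ i, f (x i)‖ ^ 2 = (n : ℝ)⁻¹ ^ 2 * ‖∑ i, (f (x i) - m)‖ ^ 2 := by
    have : m - (n : ℝ)⁻¹ • ∑ i, f (x i) = -((n : ℝ)⁻¹ • ∑ i, (f (x i) - m)) := by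
      simp [Finset.sum_sub_distrib, smul_sub, ← Nat.cast_smul_eq_nsmul ℝ, hn]
    rw [this, norm_neg, norm_smul, mul_pow, Real.norm_of_nonneg (by positivity)]
  simp_rw [hpt]
  rw [integral_const_mul, integral_norm_sum_comp_eval_sq hg hg0, integral_norm_sub_integral_sq hf,
    Fintype.card_fin]
  have hn' : (0 : ℝ) < n := by exact_mod_cast Nat.pos_of_ne_zero hn
  calc _ = (∫ z, ‖f z‖ ^ 2 ∂μ - ‖m‖ ^ 2) / n := by field_simp; rfl
    _ ≤ (∫ z, ‖f z‖ ^ 2 ∂μ) / n := by gcongr; linarith [sq_nonneg ‖m‖]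

end InnerProductSpace

theorem ofReal_one_sub_le_measure_norm_integral_sub_average_le {Z H : Type*} [MeasurableSpace Z]
    [NormedAddCommGroup H] [InnerProductSpace ℝ H] [CompleteSpace H] {K : Z → H}
    (hKm : StronglyMeasurable K) (hK : ∀ z, ‖K z‖ ≤ 1) (P : Measure Z) [IsProbabilityMeasure P]
    {n : ℕ} (hn : 0 < n) {δ : ℝ} (hδ : 0 < δ) (hδ1 : δ ≤ 1) :
    ENNReal.ofReal (1 - δ) ≤ (Measure.pi fun _ : Fin n ↦ P)
      {zs | ‖(∫ z, K z ∂P) - (n : ℝ)⁻¹ • ∑ i, K (zs i)‖ ≤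
        Real.sqrt ((∫ z, ‖K z‖ ^ 2 ∂P) / n) + Real.sqrt (2 * Real.log (1 / δ) / n)} := by
  set dev := fun zs : Fin n → Z ↦ ‖(∫ z, K z ∂P) - (n : ℝ)⁻¹ • ∑ i, K (zs i)‖
  set b := Real.sqrt (2 * Real.log (1 / δ) / n)
  have hdev_meas : Measurable dev :=
    (stronglyMeasurable_const.sub ((Finset.stronglyMeasurable_fun_sum _ fun i _ ↦
      hKm.comp_measurable (measurable_pi_apply i)).const_smul _)).norm.measurable
  have hdev_bdd : HasBoundedDifferences dev (2 / n : ℝ≥0) := by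
    simpa using hasBoundedDifferences_norm_sub_average hK (∫ z, K z ∂P)
  have hKL2 : MemLp K 2 P := .of_bound hKm.aestronglyMeasurable 1 (ae_of_all _ hK)
  have hdevL2 : MemLp dev 2 (Measure.pi fun _ ↦ P) :=
    ((memLp_const _).sub ((memLp_finsetSum _ fun i _ ↦
      hKL2.comp_measurePreserving (measurePreserving_eval _ i)).const_smul _)).norm
  have hmean : ∫ zs, dev zs ∂(Measure.pi fun _ ↦ P) ≤ Real.sqrt ((∫ z, ‖K z‖ ^ 2 ∂P) / n) :=
    (integral_le_sqrt_integral_sq hdevL2).trans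
      (Real.sqrt_le_sqrt (integral_norm_integral_sub_average_sq_le hKL2 hn.ne'))
  have htail : (Measure.pi fun _ ↦ P).real
      {zs | b ≤ dev zs - ∫ zs, dev zs ∂(Measure.pi fun _ ↦ P)} ≤ δ := by
    refine (hdev_bdd.measureReal_sub_integral_ge_le P hdev_meas (Real.sqrt_nonneg _)).trans_eq ?_
    have hlog : 0 ≤ Real.log (1 / δ) := Real.log_nonneg (by rw [le_div_iff₀ hδ]; linarith)
    have hn' : (0 : ℝ) < n := by exact_mod_cast hn
    have hexponent : -2 * b ^ 2 / (n * ((2 / n : ℝ≥0) : ℝ) ^ 2) = -Real.log (1 / δ) := by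
      rw [Real.sq_sqrt (by positivity)]
      push_cast
      field_simp
    rw [hexponent, Real.exp_neg, Real.exp_log (by positivity), one_div, inv_inv]
  refine ofReal_one_sub_le_measure_of_compl_subset (fun zs hzs ↦ ?_) htail
  simp only [Set.mem_compl_iff, Set.mem_ofPred_eq, not_le] at hzs ⊢
  linarith

theorem empirical_mean_embedding_concentration_general {Z H : Type*} [MeasurableSpace Z]
    [NormedAddCommGroup H] [InnerProductSpace ℝ H] [CompleteSpace H]
    (K : Z → H)
    (hbound : ∀ f : H, ‖f‖ ≤ 1 → ∀ z, |⟪f, K z⟫| ≤ 1)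
    (P : Measure Z) [IsProbabilityMeasure P]
    (hInt : Integrable K P)
    (n : ℕ) (hn : 0 < n) (δ : ℝ) (hδ : 0 < δ) (hδ1 : δ < 1) :
    ENNReal.ofReal (1 - δ) ≤
      (Measure.pi fun _ : Fin n => P)
        {zs | ‖(∫ x, K x ∂P) - (n : ℝ)⁻¹ • ∑ i, K (zs i)‖ ≤
          2 * Real.sqrt ((∫ z, ⟪K z, K z⟫ ∂P) / n) +
            Real.sqrt (2 * Real.log (1 / δ) / n)} := by
  -- `K` is only a.e. measurable, but McDiarmid needs bounded differences everywhere.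
  obtain ⟨K', hK'm, hK'1, hKK'⟩ := hInt.1.exists_stronglyMeasurable_ae_eq_forall_norm_le
    zero_le_one (ae_of_all _ fun z ↦ norm_le_of_forall_abs_inner_le fun f hf ↦ hbound f hf z)
  have hmean : ∫ z, K z ∂P = ∫ z, K' z ∂P := integral_congr_ae hKK'
  have hsecond : ∫ z, ⟪K z, K z⟫ ∂P = ∫ z, ‖K' z‖ ^ 2 ∂P :=
    integral_congr_ae (hKK'.mono fun z hz ↦ by simp only [hz, real_inner_self_eq_norm_sq])
  have hsample : ∀ᵐ zs ∂Measure.pi (fun _ : Fin n ↦ P), ∀ i, K (zs i) = K' (zs i) :=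
    ae_all_iff.2 fun i ↦
      (measurePreserving_eval (fun _ ↦ P) i).quasiMeasurePreserving.ae
        (p := fun z ↦ K z = K' z) hKK'
  refine (ofReal_one_sub_le_measure_norm_integral_sub_average_le hK'm hK'1 P hn hδ hδ1.le).trans
    (measure_mono_ae (hsample.mono fun zs hzs hle ↦ ?_))
  change _ ≤ _ at hle
  change _ ≤ _
  simp only [hmean, hsecond, hzs]
  linarith [Real.sqrt_nonneg ((∫ z, ‖K' z‖ ^ 2 ∂P) / n)]

/-- Theorem 1: concentration of the empirical kernel mean embedding.
With probability at least `1 − δ` over an i.i.d. sample of size `n` from `P`,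
`‖μ_k(P) − μ_k(P_S)‖ ≤ 2 √(𝔼_{z∼P}[k(z,z)]/n) + √(2 log(1/δ)/n)`. -/
theorem empirical_mean_embedding_concentration {Z H : Type*} [MeasurableSpace Z]
    [NormedAddCommGroup H] [InnerProductSpace ℝ H] [CompleteSpace H]
    (K : Z → H)
    (hbound : ∀ f : H, ‖f‖ ≤ 1 → ∀ z, |⟪f, K z⟫| ≤ 1)
    (P : Measure Z) [IsProbabilityMeasure P]
    (hInt : Integrable K P)
    (hInt2 : Integrable (fun z => ⟪K z, K z⟫) P)
    (n : ℕ) (hn : 0 < n) (δ : ℝ) (hδ : 0 < δ) (hδ1 : δ < 1) :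
    ENNReal.ofReal (1 - δ) ≤
      (Measure.pi fun _ : Fin n => P)
        {zs | ‖(∫ x, K x ∂P) - (n : ℝ)⁻¹ • ∑ i, K (zs i)‖ ≤
          2 * Real.sqrt ((∫ z, ⟪K z, K z⟫ ∂P) / n) +
            Real.sqrt (2 * Real.log (1 / δ) / n)} :=
  empirical_mean_embedding_concentration_general K hbound P hInt n hn δ hδ hδ1
end

section
/- Let k be a shift-invariant kernel on ℝ^d with nonnegative integrable Fourier transform p_k and C_k = ∫ p_k(w) dw. Then for all z, z' ∈ ℝ^d, k(z,z') = 2 C_k · 𝔼_{w,b}[cos(⟨w,z⟩ + b) cos(⟨w,z'⟩ + b)], where w ∼ p_k/C_k and b ∼ Uniform[0, 2π] are independent. -/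
/-!
Averaging over a uniform phase turns the product of two random features into the cosine
kernel: by the product-to-sum formula, `cos (a + x) * cos (b + x)` is `cos (a - b) / 2` plus a
term `cos (a + b + 2x) / 2` that integrates to zero over a period. Fubini (the integrand is
bounded and both factors are finite measures) then reduces the right-hand side to
`∫ p w * cos ⟪w, z - z'⟫`.
-/

open scoped RealInnerProductSpace
open MeasureTheory Real ProbabilityTheory

theorem Real.cos_add_mul_cos_add (a b x : ℝ) :
    cos (a + x) * cos (b + x) = (cos (a - b) + cos (a + b + 2 * x)) / 2 := by
  have h := two_mul_cos_mul_cos (a + x) (b + x)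
  rw [show a + x - (b + x) = a - b by ring, show a + x + (b + x) = a + b + 2 * x by ring] at h
  linarith

theorem integral_cos_add_mul_cos_add (a b : ℝ) :
    ∫ x in (0)..(2 * π), cos (a + x) * cos (b + x) = π * cos (a - b) := by
  have hcos : ∫ x in (0)..(2 * π), cos (a + b + 2 * x) = 0 := by
    rw [intervalIntegral.integral_comp_add_mul _ two_ne_zero, integral_cos]
    simp [show a + b + 2 * (2 * π) = a + b + 2 * π + 2 * π by ring]
  simp_rw [cos_add_mul_cos_add]
  rw [intervalIntegral.integral_div, intervalIntegral.integral_add intervalIntegrable_const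
    ((by fun_prop : Continuous fun x => cos (a + b + 2 * x)).intervalIntegrable _ _), hcos,
    intervalIntegral.integral_const, sub_zero, smul_eq_mul, add_zero]
  ring

theorem integral_cos_add_mul_cos_add_cond_Icc (a b : ℝ) :
    ∫ x, cos (a + x) * cos (b + x) ∂(volume[|Set.Icc 0 (2 * π)]) = cos (a - b) / 2 := by
  rw [ProbabilityTheory.cond, integral_smul_measure, integral_Icc_eq_integral_Ioc,
    ← intervalIntegral.integral_of_le two_pi_pos.le, integral_cos_add_mul_cos_add, volume_Icc,
    sub_zero, ENNReal.toReal_inv, ENNReal.toReal_ofReal two_pi_pos.le, smul_eq_mul]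
  field_simp

theorem integral_withDensity_ofReal {X : Type*} [MeasurableSpace X] {μ : Measure X} {q : X → ℝ}
    (hq : AEMeasurable q μ) (hq0 : 0 ≤ᵐ[μ] q) (g : X → ℝ) :
    ∫ x, g x ∂μ.withDensity (fun x => ENNReal.ofReal (q x)) = ∫ x, q x * g x ∂μ := by
  rw [integral_withDensity_eq_integral_toReal_smul₀ hq.ennreal_ofReal
    (ae_of_all _ fun _ => ENNReal.ofReal_lt_top)]
  refine integral_congr_ae ?_
  filter_upwards [hq0] with x hx
  rw [ENNReal.toReal_ofReal hx, smul_eq_mul]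

theorem integrable_cos_mul_cos {α : Type*} [MeasurableSpace α] {μ : Measure α} [IsFiniteMeasure μ]
    {f g : α → ℝ} (hf : AEStronglyMeasurable f μ) (hg : AEStronglyMeasurable g μ) :
    Integrable (fun x => cos (f x) * cos (g x)) μ := by
  refine Integrable.of_bound (by fun_prop) 1 (ae_of_all _ fun x => ?_)
  rw [norm_mul]
  exact mul_le_one₀ (abs_cos_le_one _) (norm_nonneg _) (abs_cos_le_one _)

theorem shift_invariant_kernel_random_feature_representation_general (d : ℕ)
    (p : EuclideanSpace ℝ (Fin d) → ℝ)
    (hp0 : ∀ w, 0 ≤ p w) (hpInt : Integrable p)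
    (Ck : ℝ) (hCkpos : 0 < Ck)
    (k : EuclideanSpace ℝ (Fin d) → EuclideanSpace ℝ (Fin d) → ℝ)
    (hk : ∀ z z', k z z' = ∫ w, p w * Real.cos ⟪w, z - z'⟫) :
    ∀ z z', k z z' = 2 * Ck *
      ∫ wb : EuclideanSpace ℝ (Fin d) × ℝ,
          Real.cos (⟪wb.1, z⟫ + wb.2) * Real.cos (⟪wb.1, z'⟫ + wb.2)
        ∂((volume.withDensity fun w => ENNReal.ofReal (p w / Ck)).prod
            ((ENNReal.ofReal (2 * Real.pi))⁻¹ •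
              (volume.restrict (Set.Icc (0 : ℝ) (2 * Real.pi))))) := by
  intro z z'
  have hphase : (ENNReal.ofReal (2 * π))⁻¹ • volume.restrict (Set.Icc (0 : ℝ) (2 * π)) =
      volume[|Set.Icc 0 (2 * π)] := by
    rw [ProbabilityTheory.cond, volume_Icc, sub_zero]
  have := isFiniteMeasure_withDensity_ofReal (hpInt.div_const Ck).hasFiniteIntegral
  rw [hphase, integral_prod _ (integrable_cos_mul_cos (by fun_prop) (by fun_prop))]
  simp_rw [integral_cos_add_mul_cos_add_cond_Icc, ← inner_sub_right]
  rw [integral_withDensity_ofReal (hpInt.aemeasurable.div_const Ck)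
    (ae_of_all _ fun w => div_nonneg (hp0 w) hCkpos.le), hk]
  simp_rw [div_mul_div_comm, integral_div]
  field_simp

/-- random-feature (Bochner) representation of a shift-invariant kernel:
`k(z,z') = 2 C_k 𝔼_{w,b}[cos(⟨w,z⟩+b) cos(⟨w,z'⟩+b)]`, where `w ∼ p_k / C_k` and
`b ∼ Uniform[0,2π]` are independent. -/
theorem shift_invariant_kernel_random_feature_representation (d : ℕ)
    (p : EuclideanSpace ℝ (Fin d) → ℝ)
    (hp0 : ∀ w, 0 ≤ p w) (hpmeas : Measurable p) (hpInt : Integrable p)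
    (Ck : ℝ) (hCk : Ck = ∫ w, p w) (hCkpos : 0 < Ck)
    (k : EuclideanSpace ℝ (Fin d) → EuclideanSpace ℝ (Fin d) → ℝ)
    (hk : ∀ z z', k z z' = ∫ w, p w * Real.cos ⟪w, z - z'⟫) :
    ∀ z z', k z z' = 2 * Ck *
      ∫ wb : EuclideanSpace ℝ (Fin d) × ℝ,
          Real.cos (⟪wb.1, z⟫ + wb.2) * Real.cos (⟪wb.1, z'⟫ + wb.2)
        ∂((volume.withDensity fun w => ENNReal.ofReal (p w / Ck)).prod
            ((ENNReal.ofReal (2 * Real.pi))⁻¹ •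
              (volume.restrict (Set.Icc (0 : ℝ) (2 * Real.pi))))) :=
  shift_invariant_kernel_random_feature_representation_general d p hp0 hpInt Ck hCkpos k hk
end

section
/- Let k be a shift-invariant kernel on ℝ^d with sup_z k(z,z) ≤ 1 and random-feature representation k(z,·) = 𝔼_{w,b}[g^z_{w,b}(·)]. Fix a finite set S = {z_1,…,z_n} ⊂ ℝ^d and a probability measure Q on ℝ^d. Draw (w_1,b_1),…,(w_m,b_m) i.i.d. and set ĝ^z_m = (1/m)∑_{j=1}^m g^z_{w_j,b_j}. Then with probability at least 1 − δ over the random features, ‖μ_k(P_S) − (1/n)∑_{i=1}^n ĝ^{z_i}_m‖_{L²(Q)} ≤ (2C_k/√m)(1 + √(2 log(n/δ))). -/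
open scoped RealInnerProductSpace
open MeasureTheory
open Real ProbabilityTheory
open scoped ENNReal NNReal

/-!
Write `Y(ω, t) = (1/n) ∑ᵢ g^{zᵢ}_ω(t) ∈ [-2 C_k, 2 C_k]`, so that `μ_k(P_S)(t) = 𝔼 Y(·, t)`.
For fixed `t` the error `𝔼 Y(·, t) - (1/m) ∑ⱼ Y(ωⱼ, t)` is an average of `m` independent centred
variables of range `4 C_k`, hence sub-Gaussian with variance proxy `c = 4 C_k² / m` (Hoeffding's
lemma). Writing `exp (s X²)` as a Gaussian average of `exp (u X)` gives
`𝔼 exp (s X²) ≤ (1 - 2 s c)^(-1/2)` for such `X`; by Jensen and Fubini the same bound holds for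
`exp (s ‖error‖²_{L²(Q)})`. A Chernoff bound with `1 - 2 s c = (1 + x)⁻²` then gives
`‖error‖_{L²(Q)} ≤ √c (1 + x)` outside an event of probability `exp (-x² / 2)`, which is
`δ / n ≤ δ` for `x = √(2 log (n / δ))`.
-/

lemma integral_exp_mul_sub_sq_div_two (y : ℝ) :
    ∫ x : ℝ, exp (x * y - x ^ 2 / 2) = √(2 * π) * exp (y ^ 2 / 2) := by
  have hshift (x : ℝ) :
      exp (x * y - x ^ 2 / 2) = exp (y ^ 2 / 2) * exp (-(1 / 2) * (x - y) ^ 2) := by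
    rw [← exp_add]; ring_nf
  simp_rw [hshift]
  rw [integral_const_mul, integral_sub_right_eq_self (fun x => exp (-(1 / 2) * x ^ 2)) y,
    integral_gaussian, div_div_eq_mul_div, div_one, mul_comm π, mul_comm]

lemma MeasureTheory.MemLp.eLpNorm_two_eq_ofReal_sqrt {α : Type*} [MeasurableSpace α]
    {Q : Measure α} {g : α → ℝ} (hg : MemLp g 2 Q) :
    eLpNorm g 2 Q = ENNReal.ofReal √(∫ t, g t ^ 2 ∂Q) := by
  rw [hg.eLpNorm_eq_integral_rpow_norm two_ne_zero ENNReal.ofNat_ne_top, sqrt_eq_rpow]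
  simp [Real.norm_eq_abs, sq_abs, one_div]

namespace ProbabilityTheory.HasSubgaussianMGF

variable {Ω : Type*} [MeasurableSpace Ω] {μ : Measure Ω} {X : Ω → ℝ} {c : ℝ≥0}

lemma integral_exp_mul_sq_le (h : HasSubgaussianMGF X c μ) {s : ℝ} (hs : 0 ≤ s)
    (hsc : 2 * s * c < 1) (hint : Integrable (fun ω => exp (s * X ω ^ 2)) μ) :
    ∫ ω, exp (s * X ω ^ 2) ∂μ ≤ (√(1 - 2 * s * c))⁻¹ := by
  have : IsFiniteMeasure μ := by simpa [integrable_const_iff] using h.integrable_exp_mul 0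
  set r := √(2 * s)
  have hr : r ^ 2 = 2 * s := sq_sqrt (by positivity)
  set F : Ω → ℝ → ℝ := fun ω t => exp (t * (r * X ω) - t ^ 2 / 2)
  -- `exp (s x²)` is `√(2π)⁻¹ ∫ F`, the moment generating function of a standard Gaussian at `r x`
  have hF (ω : Ω) : ∫ t, F ω t = √(2 * π) * exp (s * X ω ^ 2) := by
    rw [integral_exp_mul_sub_sq_div_two, mul_pow, hr]; ring_nf
  have hFint : Integrable (Function.uncurry F) (μ.prod volume) := by
    have hmeas : AEStronglyMeasurable (Function.uncurry F) (μ.prod volume) := by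
      have hX : AEMeasurable (fun p : Ω × ℝ => X p.1) (μ.prod volume) := h.aemeasurable.comp_fst
      exact (measurable_exp.comp_aemeasurable ((measurable_snd.aemeasurable.mul
        (hX.const_mul r)).sub ((measurable_snd.pow_const 2).aemeasurable.div_const 2)))
        |>.aestronglyMeasurable
    refine (integrable_prod_iff hmeas).2 ⟨ae_of_all _ fun ω => ?_, ?_⟩
    · exact Integrable.of_integral_ne_zero (show ∫ t, F ω t ≠ 0 by rw [hF]; positivity)
    · refine (hint.const_mul (√(2 * π))).congr (ae_of_all _ fun ω => ?_)
      simp only [← hF, Function.uncurry_apply_pair]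
      exact integral_congr_ae (ae_of_all _ fun t => (Real.norm_of_nonneg (exp_pos _).le).symm)
  have hinner (t : ℝ) : ∫ ω, F ω t ∂μ ≤ exp (-(1 / 2 - s * c) * t ^ 2) := calc
    ∫ ω, F ω t ∂μ = exp (-(t ^ 2 / 2)) * mgf X μ (t * r) := by
      rw [mgf, ← integral_const_mul]
      refine integral_congr_ae (ae_of_all _ fun ω => ?_)
      simp only [F, ← exp_add]; ring_nf
    _ ≤ exp (-(t ^ 2 / 2)) * exp (c * (t * r) ^ 2 / 2) := by gcongr; exact h.mgf_le _
    _ = exp (-(1 / 2 - s * c) * t ^ 2) := by rw [← exp_add, mul_pow, hr]; ring_nf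
  refine le_of_mul_le_mul_left ?_ (by positivity : 0 < √(2 * π))
  calc √(2 * π) * ∫ ω, exp (s * X ω ^ 2) ∂μ = ∫ t, ∫ ω, F ω t ∂μ := by
        rw [← integral_const_mul, ← integral_integral_swap hFint]
        simp_rw [hF]
    _ ≤ ∫ t : ℝ, exp (-(1 / 2 - s * c) * t ^ 2) :=
        integral_mono_of_nonneg (ae_of_all _ fun t => integral_nonneg fun ω => (exp_pos _).le)
          (integrable_exp_neg_mul_sq (by nlinarith)) (ae_of_all _ hinner)
    _ = √(2 * π) * (√(1 - 2 * s * c))⁻¹ := by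
        rw [integral_gaussian, show π / (1 / 2 - s * c) = 2 * π / (1 - 2 * s * c) by
          field_simp, sqrt_div (by positivity), div_eq_mul_inv]

end ProbabilityTheory.HasSubgaussianMGF

section SubgaussianProcess

variable {Ω T : Type*} [MeasurableSpace Ω] [MeasurableSpace T] {μ : Measure Ω} {Q : Measure T}
  [IsProbabilityMeasure Q] {f : Ω → T → ℝ} {M : ℝ} {c : ℝ≥0}

lemma integral_exp_mul_integral_sq_le [IsFiniteMeasure μ] (hf : Measurable (Function.uncurry f))
    (hM : ∀ ω t, |f ω t| ≤ M) (hsub : ∀ t, HasSubgaussianMGF (fun ω => f ω t) c μ)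
    {s : ℝ} (hs : 0 ≤ s) (hsc : 2 * s * c < 1) :
    ∫ ω, exp (s * ∫ t, f ω t ^ 2 ∂Q) ∂μ ≤ (√(1 - 2 * s * c))⁻¹ := by
  have hsq (ω t) : f ω t ^ 2 ≤ M ^ 2 := sq_le_sq' (abs_le.1 (hM ω t)).1 (abs_le.1 (hM ω t)).2
  have hexp_le (ω t) : ‖exp (s * f ω t ^ 2)‖ ≤ exp (s * M ^ 2) := by
    rw [Real.norm_of_nonneg (exp_pos _).le]
    exact exp_le_exp.2 (mul_le_mul_of_nonneg_left (hsq ω t) hs)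
  have hjoint : Integrable (fun p : Ω × T => exp (s * f p.1 p.2 ^ 2)) (μ.prod Q) :=
    .of_bound (by fun_prop) _ (ae_of_all _ fun p => hexp_le p.1 p.2)
  have hsq_int (ω) : Integrable (fun t => f ω t ^ 2) Q :=
    .of_bound (by fun_prop) (M ^ 2) (ae_of_all _ fun t => by
      rw [Real.norm_of_nonneg (sq_nonneg _)]; exact hsq ω t)
  have hjensen (ω) : exp (s * ∫ t, f ω t ^ 2 ∂Q) ≤ ∫ t, exp (s * f ω t ^ 2) ∂Q := by
    rw [← integral_const_mul]
    exact convexOn_exp.map_integral_le continuous_exp.continuousOn isClosed_univ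
      (ae_of_all _ fun _ => Set.mem_univ _) ((hsq_int ω).const_mul s)
      (.of_bound (by fun_prop) _ (ae_of_all _ fun t => hexp_le ω t))
  calc ∫ ω, exp (s * ∫ t, f ω t ^ 2 ∂Q) ∂μ
      ≤ ∫ ω, ∫ t, exp (s * f ω t ^ 2) ∂Q ∂μ :=
        integral_mono_of_nonneg (ae_of_all _ fun _ => (exp_pos _).le)
          hjoint.integral_prod_left (ae_of_all _ hjensen)
    _ = ∫ t, ∫ ω, exp (s * f ω t ^ 2) ∂μ ∂Q := integral_integral_swap hjoint
    _ ≤ ∫ _t, (√(1 - 2 * s * c))⁻¹ ∂Q :=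
        integral_mono_of_nonneg (ae_of_all _ fun _ => integral_nonneg fun _ => (exp_pos _).le)
          (integrable_const _) (ae_of_all _ fun t => (hsub t).integral_exp_mul_sq_le hs hsc
            (.of_bound (by fun_prop) _ (ae_of_all _ fun ω => hexp_le ω t)))
    _ = (√(1 - 2 * s * c))⁻¹ := by simp

lemma measurable_integral_sq (hf : Measurable (Function.uncurry f)) :
    Measurable fun ω => ∫ t, f ω t ^ 2 ∂Q :=
  (show Measurable fun p : Ω × T => f p.1 p.2 ^ 2 by fun_prop).stronglyMeasurable
    |>.integral_prod_right' |>.measurable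

lemma measureReal_le_integral_sq_le [IsFiniteMeasure μ] (hf : Measurable (Function.uncurry f))
    (hM : ∀ ω t, |f ω t| ≤ M) (hsub : ∀ t, HasSubgaussianMGF (fun ω => f ω t) c μ)
    (hc : 0 < c) {x : ℝ} (hx : 0 ≤ x) :
    μ.real {ω | c * (1 + x) ^ 2 ≤ ∫ t, f ω t ^ 2 ∂Q} ≤ exp (-x ^ 2 / 2) := by
  set G := fun ω => ∫ t, f ω t ^ 2 ∂Q
  -- the Chernoff parameter `s` is chosen so that `(1 - 2 s c)^(-1/2) = 1 + x`
  set s : ℝ := (1 - ((1 + x) ^ 2)⁻¹) / (2 * c)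
  have hc' : (0 : ℝ) < c := hc
  have hsc : 1 - 2 * s * c = ((1 + x) ^ 2)⁻¹ := by simp only [s]; field_simp; ring
  have hs : 0 ≤ s := div_nonneg (by simp [inv_le_one_iff₀, one_le_pow₀, hx]) (by positivity)
  have hG_le (ω) : G ω ≤ M ^ 2 := by
    simpa using integral_mono_of_nonneg (ae_of_all _ fun t => sq_nonneg (f ω t))
      (integrable_const (μ := Q) (M ^ 2))
      (ae_of_all _ fun t => sq_le_sq' (abs_le.1 (hM ω t)).1 (abs_le.1 (hM ω t)).2)
  have hexponent : s * (c * (1 + x) ^ 2) = x + x ^ 2 / 2 := by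
    simp only [s]; field_simp; ring
  have hint : Integrable (fun ω => exp (s * G ω)) μ := by
    refine .of_bound ((measurable_integral_sq hf).const_mul s).exp.aestronglyMeasurable
      (exp (s * M ^ 2)) (ae_of_all _ fun ω => ?_)
    rw [Real.norm_of_nonneg (exp_pos _).le]
    exact exp_le_exp.2 (mul_le_mul_of_nonneg_left (hG_le ω) hs)
  have hmgf : mgf G μ s ≤ 1 + x := calc
    mgf G μ s ≤ (√(1 - 2 * s * c))⁻¹ :=
      integral_exp_mul_integral_sq_le hf hM hsub hs
        (by linarith [inv_pos.2 (pow_pos (by linarith : 0 < 1 + x) 2)])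
    _ = 1 + x := by rw [hsc, sqrt_inv, sqrt_sq (by positivity), inv_inv]
  calc μ.real {ω | c * (1 + x) ^ 2 ≤ G ω}
      ≤ exp (-s * (c * (1 + x) ^ 2)) * mgf G μ s := measure_ge_le_exp_mul_mgf _ hs hint
    _ ≤ exp (-(s * (c * (1 + x) ^ 2))) * (1 + x) := by rw [neg_mul]; gcongr
    _ ≤ exp (-(x + x ^ 2 / 2)) * exp x := by
        rw [hexponent]; gcongr; linarith [add_one_le_exp x]
    _ = exp (-x ^ 2 / 2) := by rw [← exp_add]; ring_nf

lemma ofReal_one_sub_exp_le_measure_eLpNorm_le [IsProbabilityMeasure μ]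
    (hf : Measurable (Function.uncurry f)) (hM : ∀ ω t, |f ω t| ≤ M)
    (hsub : ∀ t, HasSubgaussianMGF (fun ω => f ω t) c μ) (hc : 0 < c) {x : ℝ} (hx : 0 ≤ x) :
    ENNReal.ofReal (1 - exp (-x ^ 2 / 2)) ≤
      μ {ω | eLpNorm (f ω) 2 Q ≤ ENNReal.ofReal (√c * (1 + x))} := by
  have hG := measurable_integral_sq (Q := Q) hf
  have hlt : {ω | ∫ t, f ω t ^ 2 ∂Q < c * (1 + x) ^ 2} =
      {ω | c * (1 + x) ^ 2 ≤ ∫ t, f ω t ^ 2 ∂Q}ᶜ := by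
    ext; simp
  calc ENNReal.ofReal (1 - exp (-x ^ 2 / 2))
      ≤ ENNReal.ofReal (μ.real {ω | ∫ t, f ω t ^ 2 ∂Q < c * (1 + x) ^ 2}) := by
        rw [hlt, probReal_compl_eq_one_sub (μ := μ) (measurableSet_le measurable_const hG)]
        exact ENNReal.ofReal_le_ofReal
          (by linarith [measureReal_le_integral_sq_le (Q := Q) hf hM hsub hc hx])
    _ = μ {ω | ∫ t, f ω t ^ 2 ∂Q < c * (1 + x) ^ 2} := ofReal_measureReal
    _ ≤ _ := by
        refine measure_mono fun ω hω => ?_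
        have hmem : MemLp (f ω) 2 Q := .of_bound (hf.of_uncurry_left).aestronglyMeasurable M
          (ae_of_all _ fun t => hM ω t)
        rw [Set.mem_ofPred_eq, hmem.eLpNorm_two_eq_ofReal_sqrt]
        refine ENNReal.ofReal_le_ofReal ?_
        rw [← sqrt_sq (by positivity : 0 ≤ √c * (1 + x)), mul_pow, sq_sqrt (NNReal.coe_nonneg c)]
        exact sqrt_le_sqrt hω.le

end SubgaussianProcess

lemma Convex.inv_natCast_mul_sum_mem {s : Set ℝ} (hs : Convex ℝ s) {n : ℕ} (hn : 0 < n)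
    {g : Fin n → ℝ} (hg : ∀ i, g i ∈ s) : (n : ℝ)⁻¹ * ∑ i, g i ∈ s := by
  rw [Finset.mul_sum]
  exact hs.sum_mem (fun _ _ => by positivity) (by simp [hn.ne']) fun i _ => hg i

lemma hasSubgaussianMGF_pi_mean_sub_integral {α : Type*} [MeasurableSpace α] {ν : Measure α}
    [IsProbabilityMeasure ν] {Y : α → ℝ} (hY : AEMeasurable Y ν) {a b : ℝ}
    (hab : ∀ᵐ ω ∂ν, Y ω ∈ Set.Icc a b) (m : ℕ) :
    HasSubgaussianMGF (fun ωs : Fin m → α => (m : ℝ)⁻¹ * ∑ j, (Y (ωs j) - ν[Y]))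
      ((‖b - a‖₊ / 2) ^ 2 / m) (Measure.pi fun _ => ν) := by
  have hcoord (j : Fin m) : HasSubgaussianMGF (fun ωs : Fin m → α => Y (ωs j) - ν[Y])
      ((‖b - a‖₊ / 2) ^ 2) (Measure.pi fun _ => ν) := by
    refine HasSubgaussianMGF.of_map (X := fun ω => Y ω - ν[Y]) (Y := fun ωs : Fin m → α => ωs j)
      (measurable_pi_apply j).aemeasurable ?_
    rw [(measurePreserving_eval (fun _ => ν) j).map_eq]
    exact hasSubgaussianMGF_of_mem_Icc hY hab
  have hindep : iIndepFun (fun j (ωs : Fin m → α) => Y (ωs j) - ν[Y]) (Measure.pi fun _ => ν) :=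
    iIndepFun_pi fun _ => hY.sub_const _
  convert (HasSubgaussianMGF.sum_of_iIndepFun hindep (s := Finset.univ)
    fun j _ => hcoord j).const_mul (m : ℝ)⁻¹ using 1
  rw [Finset.sum_const, Finset.card_univ, Fintype.card_fin, nsmul_eq_mul]
  ext
  -- `const_mul` produces the factor as an anonymous subtype element, opaque to `push_cast`
  change _ = (m : ℝ)⁻¹ ^ 2 * ((m : ℝ) * ((‖b - a‖₊ / 2) ^ 2 : ℝ≥0))
  rcases Nat.eq_zero_or_pos m with rfl | hm
  · simp
  · push_cast
    field_simp

theorem ofReal_one_sub_exp_le_measure_eLpNorm_integral_sub_mean_le {α T : Type*}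
    [MeasurableSpace α] [MeasurableSpace T] {ν : Measure α} [IsProbabilityMeasure ν]
    {Q : Measure T} [IsProbabilityMeasure Q] {Y : α → T → ℝ}
    (hY : Measurable (Function.uncurry Y)) {a b : ℝ} (hab : a < b)
    (hYab : ∀ ω t, Y ω t ∈ Set.Icc a b) {m : ℕ} (hm : 0 < m) {x : ℝ} (hx : 0 ≤ x) :
    ENNReal.ofReal (1 - exp (-x ^ 2 / 2)) ≤
      (Measure.pi fun _ : Fin m => ν) {ωs | eLpNorm (fun t => ∫ ω, Y ω t ∂ν -
        (m : ℝ)⁻¹ * ∑ j, Y (ωs j) t) 2 Q ≤ ENNReal.ofReal ((b - a) / (2 * √m) * (1 + x))} := by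
  set c : ℝ≥0 := (‖b - a‖₊ / 2) ^ 2 / m
  have hc : 0 < c := by
    have : 0 < ‖b - a‖₊ := nnnorm_pos.2 (sub_ne_zero.2 hab.ne')
    positivity
  have hsqrt : √(c : ℝ) = (b - a) / (2 * √m) := by
    simp only [c, NNReal.coe_div, NNReal.coe_pow, coe_nnnorm, NNReal.coe_natCast, NNReal.coe_ofNat,
      Real.norm_of_nonneg (sub_nonneg.2 hab.le)]
    rw [sqrt_div (by positivity), sqrt_sq (by linarith)]
    field_simp
  have hmean (t : T) : ∫ ω, Y ω t ∂ν ∈ Set.Icc a b :=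
    (convex_Icc a b).integral_mem isClosed_Icc (ae_of_all _ (hYab · t))
      (Integrable.of_mem_Icc a b hY.of_uncurry_right.aemeasurable (ae_of_all _ (hYab · t)))
  have hemp (ωs : Fin m → α) (t : T) : (m : ℝ)⁻¹ * ∑ j, Y (ωs j) t ∈ Set.Icc a b :=
    (convex_Icc a b).inv_natCast_mul_sum_mem hm fun j => hYab _ t
  have hsub (t : T) : HasSubgaussianMGF (fun ωs : Fin m → α => ∫ ω, Y ω t ∂ν -
      (m : ℝ)⁻¹ * ∑ j, Y (ωs j) t) c (Measure.pi fun _ => ν) := by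
    refine (hasSubgaussianMGF_pi_mean_sub_integral hY.of_uncurry_right.aemeasurable
      (ae_of_all _ (hYab · t)) m).neg.congr (ae_of_all _ fun ωs => ?_)
    simp only [Pi.neg_apply, Finset.sum_sub_distrib, Finset.sum_const, Finset.card_univ,
      Fintype.card_fin, nsmul_eq_mul]
    field_simp
    ring
  have hmeas : Measurable (Function.uncurry fun (ωs : Fin m → α) t =>
      ∫ ω, Y ω t ∂ν - (m : ℝ)⁻¹ * ∑ j, Y (ωs j) t) := by
    refine ((hY.stronglyMeasurable.integral_prod_left (μ := ν)).measurable.comp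
      measurable_snd).sub (measurable_const.mul (Finset.measurable_sum _ fun j _ => ?_))
    exact hY.comp (show Measurable fun p : (Fin m → α) × T => (p.1 j, p.2) by fun_prop)
  rw [← hsqrt]
  refine ofReal_one_sub_exp_le_measure_eLpNorm_le hmeas (M := b - a) (fun ωs t => ?_) hsub hc hx
  obtain ⟨h₁, h₂⟩ := hmean t
  obtain ⟨h₃, h₄⟩ := hemp ωs t
  exact abs_sub_le_iff.2 ⟨by linarith, by linarith⟩

section RandomFourierFeature

variable {E : Type*} [NormedAddCommGroup E] [InnerProductSpace ℝ E]

/-- The paper's `g^z_{w,b}(t)`, with `ω = (w, b)`. -/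
noncomputable def randomFourierFeature (C : ℝ) (ω : E × ℝ) (z t : E) : ℝ :=
  2 * C * cos (⟪ω.1, z⟫ + ω.2) * cos (⟪ω.1, t⟫ + ω.2)

lemma randomFourierFeature_mem_Icc {C : ℝ} (hC : 0 ≤ C) (ω : E × ℝ) (z t : E) :
    randomFourierFeature C ω z t ∈ Set.Icc (-(2 * C)) (2 * C) := by
  rw [Set.mem_Icc, ← abs_le, randomFourierFeature, abs_mul, abs_mul, abs_of_nonneg (by positivity)]
  calc 2 * C * |cos (⟪ω.1, z⟫ + ω.2)| * |cos (⟪ω.1, t⟫ + ω.2)| ≤ 2 * C * 1 * 1 := by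
        gcongr <;> exact abs_cos_le_one _
    _ = 2 * C := by ring

section Measurable

variable [MeasurableSpace E] [OpensMeasurableSpace E] [SecondCountableTopology E]

lemma measurable_randomFourierFeature (C : ℝ) (z : E) :
    Measurable (Function.uncurry fun ω t => randomFourierFeature C ω z t) := by
  unfold randomFourierFeature
  fun_prop

lemma integrable_randomFourierFeature {C : ℝ} (hC : 0 ≤ C) (ν : Measure (E × ℝ))
    [IsFiniteMeasure ν] (z t : E) : Integrable (fun ω => randomFourierFeature C ω z t) ν :=
  .of_mem_Icc _ _ (measurable_randomFourierFeature C z).of_uncurry_right.aemeasurable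
    (ae_of_all _ fun ω => randomFourierFeature_mem_Icc hC ω z t)

end Measurable

lemma integral_randomFourierFeature [MeasurableSpace E] (C : ℝ) (ν : Measure (E × ℝ))
    (z t : E) : ∫ ω, randomFourierFeature C ω z t ∂ν =
      2 * C * ∫ ω, cos (⟪ω.1, z⟫ + ω.2) * cos (⟪ω.1, t⟫ + ω.2) ∂ν := by
  rw [← integral_const_mul]
  simp only [randomFourierFeature, mul_assoc]

end RandomFourierFeature

lemma exp_neg_sqrt_two_mul_log_sq_div_two {y : ℝ} (hy : 1 ≤ y) :
    exp (-√(2 * log y) ^ 2 / 2) = y⁻¹ := by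
  rw [sq_sqrt (mul_nonneg zero_le_two (log_nonneg hy)),
    show -(2 * log y) / 2 = log y⁻¹ by rw [log_inv]; ring, exp_log (by positivity)]

theorem random_feature_embedding_approximation_general (d : ℕ)
    (Ck : ℝ) (hCkpos : 0 < Ck)
    (ν : Measure (EuclideanSpace ℝ (Fin d) × ℝ)) [IsProbabilityMeasure ν]
    (k : EuclideanSpace ℝ (Fin d) → EuclideanSpace ℝ (Fin d) → ℝ)
    (hk : ∀ z t, k z t = 2 * Ck *
        ∫ wb, Real.cos (⟪wb.1, z⟫ + wb.2) * Real.cos (⟪wb.1, t⟫ + wb.2) ∂ν)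
    (Q : Measure (EuclideanSpace ℝ (Fin d))) [IsProbabilityMeasure Q]
    (n : ℕ) (hn : 0 < n) (z : Fin n → EuclideanSpace ℝ (Fin d))
    (m : ℕ) (hm : 0 < m) (δ : ℝ) (hδ : 0 < δ) (hδ1 : δ < 1) :
    ENNReal.ofReal (1 - δ) ≤
      (Measure.pi fun _ : Fin m => ν)
        {ωs | eLpNorm
            (fun t => (n : ℝ)⁻¹ * ∑ i, k (z i) t -
              (n : ℝ)⁻¹ * ∑ i, (m : ℝ)⁻¹ * ∑ j,
                2 * Ck * Real.cos (⟪(ωs j).1, z i⟫ + (ωs j).2) *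
                  Real.cos (⟪(ωs j).1, t⟫ + (ωs j).2)) 2 Q
          ≤ ENNReal.ofReal
              (2 * Ck / Real.sqrt m * (1 + Real.sqrt (2 * Real.log (n / δ))))} := by
  set Y := fun ω t => (n : ℝ)⁻¹ * ∑ i, randomFourierFeature Ck ω (z i) t
  have hYab (ω t) : Y ω t ∈ Set.Icc (-(2 * Ck)) (2 * Ck) := (convex_Icc _ _).inv_natCast_mul_sum_mem
    hn fun i => randomFourierFeature_mem_Icc hCkpos.le ω (z i) t
  have hkY (t) : (n : ℝ)⁻¹ * ∑ i, k (z i) t = ∫ ω, Y ω t ∂ν := by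
    rw [integral_const_mul,
      integral_finsetSum _ fun i _ => integrable_randomFourierFeature hCkpos.le ν (z i) t]
    simp only [integral_randomFourierFeature, hk]
  have hswap (ωs : Fin m → EuclideanSpace ℝ (Fin d) × ℝ) (t) : (m : ℝ)⁻¹ * ∑ j, Y (ωs j) t =
      (n : ℝ)⁻¹ * ∑ i, (m : ℝ)⁻¹ * ∑ j, randomFourierFeature Ck (ωs j) (z i) t := by
    simp only [Y, Finset.mul_sum]
    rw [Finset.sum_comm]
    simp only [mul_left_comm]
  have hn1 : (1 : ℝ) ≤ n := Nat.one_le_cast.2 hn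
  have hnδ : 1 ≤ n / δ := by rw [le_div_iff₀ hδ]; linarith
  calc ENNReal.ofReal (1 - δ) ≤ ENNReal.ofReal (1 - exp (-√(2 * log (n / δ)) ^ 2 / 2)) := by
        rw [exp_neg_sqrt_two_mul_log_sq_div_two hnδ, inv_div]
        exact ENNReal.ofReal_le_ofReal (by linarith [div_le_self hδ.le hn1])
    _ ≤ _ := ofReal_one_sub_exp_le_measure_eLpNorm_integral_sub_mean_le (Q := Q) (Y := Y)
        (measurable_const.mul (Finset.measurable_sum _ fun i _ =>
          measurable_randomFourierFeature Ck (z i))) (by linarith) hYab hm (sqrt_nonneg _)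
    _ = _ := by
        simp only [hkY, hswap, show (2 * Ck - -(2 * Ck)) / (2 * √m) = 2 * Ck / √m by ring]
        rfl

/-- Lemma 1: random-feature approximation of the empirical kernel mean
embedding in `L²(Q)`. With probability at least `1 − δ` over the i.i.d. random features
`(w_j,b_j) ∼ (p_k/C_k) × Uniform[0,2π]`,
`‖μ_k(P_S) − (1/n) ∑_i ĝ_m^{z_i}‖_{L²(Q)} ≤ (2 C_k/√m)(1 + √(2 log(n/δ)))`. -/
theorem random_feature_embedding_approximation (d : ℕ)
    (p : EuclideanSpace ℝ (Fin d) → ℝ)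
    (hp0 : ∀ w, 0 ≤ p w) (hpmeas : Measurable p) (hpInt : Integrable p)
    (Ck : ℝ) (hCkpos : 0 < Ck) (hCk : Ck = ∫ w, p w)
    (ν : Measure (EuclideanSpace ℝ (Fin d) × ℝ)) [IsProbabilityMeasure ν]
    (hν : ν = (volume.withDensity fun w => ENNReal.ofReal (p w / Ck)).prod
        ((ENNReal.ofReal (2 * Real.pi))⁻¹ •
          (volume.restrict (Set.Icc (0 : ℝ) (2 * Real.pi)))))
    (k : EuclideanSpace ℝ (Fin d) → EuclideanSpace ℝ (Fin d) → ℝ)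
    (hk : ∀ z t, k z t = 2 * Ck *
        ∫ wb, Real.cos (⟪wb.1, z⟫ + wb.2) * Real.cos (⟪wb.1, t⟫ + wb.2) ∂ν)
    (hkbound : ∀ z, k z z ≤ 1)
    (Q : Measure (EuclideanSpace ℝ (Fin d))) [IsProbabilityMeasure Q]
    (n : ℕ) (hn : 0 < n) (z : Fin n → EuclideanSpace ℝ (Fin d))
    (m : ℕ) (hm : 0 < m) (δ : ℝ) (hδ : 0 < δ) (hδ1 : δ < 1) :
    ENNReal.ofReal (1 - δ) ≤
      (Measure.pi fun _ : Fin m => ν)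
        {ωs | eLpNorm
            (fun t => (n : ℝ)⁻¹ * ∑ i, k (z i) t -
              (n : ℝ)⁻¹ * ∑ i, (m : ℝ)⁻¹ * ∑ j,
                2 * Ck * Real.cos (⟪(ωs j).1, z i⟫ + (ωs j).2) *
                  Real.cos (⟪(ωs j).1, t⟫ + (ωs j).2)) 2 Q
          ≤ ENNReal.ofReal
              (2 * Ck / Real.sqrt m * (1 + Real.sqrt (2 * Real.log (n / δ))))} :=
  random_feature_embedding_approximation_general d Ck hCkpos ν k hk Q n hn z m hm δ hδ hδ1
end
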